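/- Let z = (z_1, ..., z_n) be uniformly distributed on the unit sphere in R^n with n >= 2. Then for every 1/n <= delta < 1 and every coordinate i, P(z_i^2 >= delta) <= e^{-((n-1)/2) * delta + 1}. -/

import Mathlib

/-!
Write `z = x / ‖x‖` with `x` a standard Gaussian vector. Then `δ ≤ z_i ^ 2` says
`c * ∑_{j ≠ i} x_j ^ 2 ≤ x_i ^ 2` with `c = δ / (1 - δ)`. Conditionally on the other coordinates,
the Chernoff bound `P(a ≤ x_i ^ 2) ≤ 2 exp (-a / 2)` applies, and averaging
`exp (-(c / 2) * ∑_{j ≠ i} x_j ^ 2)` over the remaining `n - 1` Gaussians gives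
`(1 + c) ^ (-(n - 1) / 2) = (1 - δ) ^ ((n - 1) / 2) ≤ exp (-(n - 1) δ / 2)`; finally `2 ≤ e`.
-/

open MeasureTheory ProbabilityTheory

/-- The standard Gaussian measure on `ℝ^n` (as `EuclideanSpace`), i.e. the product of `n`
standard one-dimensional Gaussians. -/
noncomputable def stdGaussian (n : ℕ) : Measure (EuclideanSpace ℝ (Fin n)) :=
  Measure.map (⇑(EuclideanSpace.equiv (Fin n) ℝ).symm)
    (Measure.pi fun _ : Fin n => gaussianReal 0 1)

/-- The uniform probability measure on the unit sphere of `ℝ^n`, realized as the law of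
`x / ‖x‖` for a standard Gaussian vector `x`. -/
noncomputable def sphereUniform (n : ℕ) : Measure (EuclideanSpace ℝ (Fin n)) :=
  Measure.map (fun x => ‖x‖⁻¹ • x) (stdGaussian n)

open Real

lemma gaussianReal_measureReal_sq_ge_le (a : ℝ) :
    (gaussianReal 0 1).real {t | a ≤ t ^ 2} ≤ 2 * exp (-(a / 2)) := by
  rcases le_or_gt a 0 with ha | ha
  · calc (gaussianReal 0 1).real {t | a ≤ t ^ 2} ≤ 1 := measureReal_le_one
      _ ≤ 2 * exp (-(a / 2)) := by
        have : 1 ≤ exp (-(a / 2)) := one_le_exp (by linarith)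
        linarith
  set s := √a
  have hsa : s * s = a := mul_self_sqrt ha.le
  have hchernoff : ∀ t : ℝ, exp (-t * t) * mgf id (gaussianReal 0 1) t = exp (-(t ^ 2 / 2)) := by
    intro t
    rw [mgf_id_gaussianReal, ← exp_add]
    congr 1
    push_cast
    ring
  have hsplit : {t : ℝ | a ≤ t ^ 2} ⊆ {t | s ≤ id t} ∪ {t | id t ≤ -s} := by
    intro t ht
    have : s ≤ |t| := by simpa [s, sqrt_sq_eq_abs] using sqrt_le_sqrt ht
    rcases le_total 0 t with h | h
    · exact Or.inl (by rwa [abs_of_nonneg h] at this)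
    · exact Or.inr (show t ≤ -s by rw [abs_of_nonpos h] at this; linarith)
  calc (gaussianReal 0 1).real {t | a ≤ t ^ 2}
      ≤ (gaussianReal 0 1).real {t | s ≤ id t} + (gaussianReal 0 1).real {t | id t ≤ -s} :=
        (measureReal_mono hsplit).trans (measureReal_union_le _ _)
    _ ≤ exp (-(a / 2)) + exp (-(a / 2)) := by
        gcongr
        · have := measure_ge_le_exp_mul_mgf (X := id) s (sqrt_nonneg a)
            (integrable_exp_mul_gaussianReal (μ := 0) (v := 1) s)
          rwa [hchernoff, sq, hsa] at this
        · have := measure_le_le_exp_mul_mgf (X := id) (-s) (neg_nonpos.2 (sqrt_nonneg a))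
            (integrable_exp_mul_gaussianReal (μ := 0) (v := 1) (-s))
          rwa [hchernoff, neg_sq, sq, hsa] at this
    _ = 2 * exp (-(a / 2)) := by ring

-- For `2 * b ≤ -1` both sides are junk values `0`.
lemma integral_exp_neg_mul_sq_gaussianReal (b : ℝ) :
    ∫ t, exp (-b * t ^ 2) ∂gaussianReal 0 1 = (√(1 + 2 * b))⁻¹ := by
  have hpdf : ∀ t, gaussianPDFReal 0 1 t • exp (-b * t ^ 2)
      = (√(2 * π))⁻¹ * exp (-(b + 1 / 2) * t ^ 2) := by
    intro t
    rw [gaussianPDFReal_def, smul_eq_mul, mul_assoc, ← exp_add]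
    push_cast
    ring_nf
  rw [integral_gaussianReal_eq_integral_smul one_ne_zero]
  simp_rw [hpdf]
  rw [integral_const_mul, integral_gaussian, ← sqrt_inv, ← sqrt_inv, ← sqrt_mul (by positivity)]
  congr 1
  field_simp
  ring

lemma lintegral_exp_neg_mul_sum_sq_pi_gaussianReal {ι : Type*} [Fintype ι] {b : ℝ}
    (hb : -1 < 2 * b) :
    ∫⁻ y, ENNReal.ofReal (exp (-b * ∑ j, y j ^ 2)) ∂Measure.pi (fun _ : ι ↦ gaussianReal 0 1)
      = ENNReal.ofReal ((√(1 + 2 * b))⁻¹ ^ Fintype.card ι) := by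
  have hint : Integrable (fun t ↦ exp (-b * t ^ 2)) (gaussianReal 0 1) :=
    .of_integral_ne_zero <| by
      rw [integral_exp_neg_mul_sq_gaussianReal]
      exact (inv_pos.2 (sqrt_pos.2 (by linarith))).ne'
  simp_rw [Finset.mul_sum, exp_sum]
  rw [← ofReal_integral_eq_lintegral_ofReal (.fintype_prod fun _ ↦ hint)
      (ae_of_all _ fun _ ↦ by positivity),
    integral_fintype_prod_eq_pow (fun t ↦ exp (-b * t ^ 2)), integral_exp_neg_mul_sq_gaussianReal]

lemma prod_pi_gaussianReal_sq_ge_mul_sum_sq_le {ι : Type*} [Fintype ι] {c : ℝ} (hc : -1 < c) :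
    (gaussianReal 0 1).prod (Measure.pi fun _ : ι ↦ gaussianReal 0 1)
        {p | c * ∑ j, p.2 j ^ 2 ≤ p.1 ^ 2}
      ≤ ENNReal.ofReal (2 * (√(1 + c))⁻¹ ^ Fintype.card ι) := by
  rw [Measure.prod_apply_symm (measurableSet_le (by fun_prop) (by fun_prop))]
  calc ∫⁻ y, gaussianReal 0 1 {t | c * ∑ j, y j ^ 2 ≤ t ^ 2} ∂Measure.pi _
      ≤ ∫⁻ y, 2 * ENNReal.ofReal (exp (-(c / 2) * ∑ j, y j ^ 2)) ∂Measure.pi _ := by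
        refine lintegral_mono fun y ↦ ?_
        rw [← ofReal_measureReal, ← ENNReal.ofReal_ofNat 2, ← ENNReal.ofReal_mul zero_le_two]
        refine ENNReal.ofReal_le_ofReal ((gaussianReal_measureReal_sq_ge_le _).trans_eq ?_)
        ring_nf
    _ = ENNReal.ofReal (2 * (√(1 + c))⁻¹ ^ Fintype.card ι) := by
        rw [lintegral_const_mul _ (by fun_prop),
          lintegral_exp_neg_mul_sum_sq_pi_gaussianReal (by linarith),
          ENNReal.ofReal_mul zero_le_two, ENNReal.ofReal_ofNat]
        ring_nf

lemma pi_gaussianReal_sq_ge_mul_sum_sq_le {m : ℕ} (i : Fin (m + 1)) {δ : ℝ} (hδ : δ < 1) :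
    Measure.pi (fun _ : Fin (m + 1) ↦ gaussianReal 0 1) {x | δ * ∑ j, x j ^ 2 ≤ x i ^ 2}
      ≤ ENNReal.ofReal (2 * √(1 - δ) ^ m) := by
  have h1δ : 0 < 1 - δ := sub_pos.2 hδ
  have hsplit : {x : Fin (m + 1) → ℝ | δ * ∑ j, x j ^ 2 ≤ x i ^ 2}
      = MeasurableEquiv.piFinSuccAbove (fun _ ↦ ℝ) i ⁻¹'
          {p | δ / (1 - δ) * ∑ j, p.2 j ^ 2 ≤ p.1 ^ 2} := by
    ext x
    simp only [Set.mem_preimage, Set.mem_ofPred_eq, MeasurableEquiv.piFinSuccAbove_apply,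
      Fin.insertNthEquiv_symm_apply, Fin.removeNth, Fin.sum_univ_succAbove _ i]
    rw [div_mul_eq_mul_div, div_le_iff₀ h1δ]
    constructor <;> intro h <;> linarith
  have hsqrt : (√(1 + δ / (1 - δ)))⁻¹ = √(1 - δ) := by
    rw [← sqrt_inv]
    congr 1
    field_simp
    ring
  rw [hsplit, (measurePreserving_piFinSuccAbove _ i).measure_preimage_equiv]
  convert prod_pi_gaussianReal_sq_ge_mul_sum_sq_le (ι := Fin m) (c := δ / (1 - δ)) ?_ using 3
  · rw [hsqrt, Fintype.card_fin]
  · rw [lt_div_iff₀ h1δ]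
    linarith

lemma mul_norm_sq_le_sq_of_le_sq_inv_norm_smul {n : ℕ} {i : Fin n} {δ : ℝ}
    {x : EuclideanSpace ℝ (Fin n)} (hx : δ ≤ (‖x‖⁻¹ • x) i ^ 2) : δ * ‖x‖ ^ 2 ≤ x i ^ 2 := by
  rcases eq_or_ne x 0 with rfl | hx0
  · simp
  rw [PiLp.smul_apply, smul_eq_mul, mul_pow, inv_pow, inv_mul_eq_div,
    le_div_iff₀ (by positivity)] at hx
  exact hx

lemma sphereUniform_sq_ge_le_pi_gaussianReal (n : ℕ) (i : Fin n) (δ : ℝ) :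
    sphereUniform n {z | δ ≤ z i ^ 2}
      ≤ Measure.pi (fun _ : Fin n ↦ gaussianReal 0 1) {x | δ * ∑ j, x j ^ 2 ≤ x i ^ 2} := by
  have hS : MeasurableSet {z : EuclideanSpace ℝ (Fin n) | δ ≤ z i ^ 2} :=
    measurableSet_le measurable_const (by fun_prop)
  have hnormalize : Measurable fun x : EuclideanSpace ℝ (Fin n) ↦ ‖x‖⁻¹ • x := by fun_prop
  rw [sphereUniform, Measure.map_apply hnormalize hS, _root_.stdGaussian,
    Measure.map_apply (by fun_prop) (hnormalize hS)]
  refine measure_mono fun x hx ↦ ?_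
  have := mul_norm_sq_le_sq_of_le_sq_inv_norm_smul hx
  simpa [EuclideanSpace.norm_sq_eq] using this

lemma two_mul_sqrt_one_sub_pow_le_exp (δ : ℝ) (m : ℕ) :
    2 * √(1 - δ) ^ m ≤ exp (-(m / 2) * δ + 1) := by
  have hsqrt : √(1 - δ) ≤ exp (-δ / 2) := by
    rw [exp_half]
    exact sqrt_le_sqrt (by linarith [add_one_le_exp (-δ)])
  calc 2 * √(1 - δ) ^ m ≤ exp 1 * exp (-δ / 2) ^ m := by
        gcongr
        exact exp_one_gt_two.le
    _ = exp (-(m / 2) * δ + 1) := by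
        rw [← exp_nat_mul, ← exp_add]
        ring_nf

theorem stmt4_general (n : ℕ) (δ : ℝ) (hδu : δ < 1)
    (i : Fin n) :
    sphereUniform n {z | δ ≤ (z i) ^ 2} ≤
      ENNReal.ofReal (Real.exp (-(((n : ℝ) - 1) / 2) * δ + 1)) := by
  obtain ⟨m, rfl⟩ := Nat.exists_eq_add_one_of_ne_zero i.pos.ne'
  calc sphereUniform (m + 1) {z | δ ≤ z i ^ 2}
      ≤ Measure.pi (fun _ ↦ gaussianReal 0 1) {x | δ * ∑ j, x j ^ 2 ≤ x i ^ 2} :=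
        sphereUniform_sq_ge_le_pi_gaussianReal _ i δ
    _ ≤ ENNReal.ofReal (2 * √(1 - δ) ^ m) := pi_gaussianReal_sq_ge_mul_sum_sq_le i hδu
    _ ≤ ENNReal.ofReal (Real.exp (-((((m + 1 : ℕ) : ℝ) - 1) / 2) * δ + 1)) := by
        refine ENNReal.ofReal_le_ofReal ((two_mul_sqrt_one_sub_pow_le_exp δ m).trans_eq ?_)
        push_cast
        ring_nf

/-- Tail bound for a coordinate of a uniform random point `z` on the unit sphere in `ℝ^n`,
`n ≥ 2`: for `1/n ≤ δ < 1` and every coordinate `i`,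
`P(z_i^2 ≥ δ) ≤ exp(-((n-1)/2) δ + 1)`. -/
theorem stmt4 (n : ℕ) (hn : 2 ≤ n) (δ : ℝ) (hδl : 1 / (n : ℝ) ≤ δ) (hδu : δ < 1)
    (i : Fin n) :
    sphereUniform n {z | δ ≤ (z i) ^ 2} ≤
      ENNReal.ofReal (Real.exp (-(((n : ℝ) - 1) / 2) * δ + 1)) :=
  stmt4_general n δ hδu i
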